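/- arXiv:2102.12148 — 3 statements merged into one kernel-verified Lean document; each statement's English description precedes it below -/
import Mathlib

section
/- Let M be a finitely generated faithful multiplication R-module and N a submodule of M. Then N is a 1-absorbing primary submodule of M if and only if (N :_R M) is a 1-absorbing primary ideal of R. -/
open Submodule

section Defs

variable {R : Type*} [CommRing R]

/-- A prime submodule: proper, and `a • m ∈ N` implies `m ∈ N` or `a ∈ (N :_R M)`. -/
def IsPrimeSubmodule {M : Type*} [AddCommGroup M] [Module R M] (N : Submodule R M) : Prop :=
  N ≠ ⊤ ∧ ∀ (a : R) (m : M), a • m ∈ N → m ∈ N ∨ a ∈ N.colon ⊤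

/-- The `M`-radical of `N`: intersection of all prime submodules containing `N`. -/
def Mrad {M : Type*} [AddCommGroup M] [Module R M] (N : Submodule R M) : Submodule R M :=
  sInf {P | IsPrimeSubmodule P ∧ N ≤ P}

/-- A 1-absorbing primary submodule. -/
def Is1AbsPrimary {M : Type*} [AddCommGroup M] [Module R M] (N : Submodule R M) : Prop :=
  N ≠ ⊤ ∧ ∀ a b : R, ¬ IsUnit a → ¬ IsUnit b → ∀ m : M,
    (a * b) • m ∈ N → a * b ∈ N.colon ⊤ ∨ m ∈ Mrad N

/-- A 2-absorbing primary submodule. -/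
def Is2AbsPrimary {M : Type*} [AddCommGroup M] [Module R M] (N : Submodule R M) : Prop :=
  N ≠ ⊤ ∧ ∀ (a b : R) (m : M), (a * b) • m ∈ N →
    a * b ∈ N.colon ⊤ ∨ a • m ∈ Mrad N ∨ b • m ∈ Mrad N

/-- A 1-absorbing primary ideal. -/
def Is1AbsPrimaryIdeal {A : Type*} [CommRing A] (I : Ideal A) : Prop :=
  I ≠ ⊤ ∧ ∀ a b c : A, ¬ IsUnit a → ¬ IsUnit b → ¬ IsUnit c →
    a * b * c ∈ I → a * b ∈ I ∨ c ∈ I.radical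

/-- A multiplication module: every submodule `N` satisfies `N = (N :_R M) M`. -/
def IsMultiplicationModule (R M : Type*) [CommRing R] [AddCommGroup M] [Module R M] : Prop :=
  ∀ N : Submodule R M, N = (N.colon ⊤) • (⊤ : Submodule R M)

end Defs

/-! For a finitely generated faithful module `M`, `Supp (M / IM) = Supp M ∩ V(I) = V(I)`, so
`(IM :_R M) ⊆ √I`. If `M` is moreover a multiplication module, this makes `pM` a prime submodule
for every prime ideal `p`, and then `M-rad(N) = √(N :_R M) M`. Both implications follow by moving
between `(a * b) • m ∈ N` and the ideal `(Rm :_R M)`, using `m ∈ (Rm :_R M) M`. -/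

section

open PrimeSpectrum

variable {R M : Type*} [CommRing R] [AddCommGroup M] [Module R M]

lemma colon_top_eq_top_iff {N : Submodule R M} : N.colon ⊤ = ⊤ ↔ N = ⊤ := by
  rw [colon_eq_top_iff_subset, Set.top_eq_univ, Set.univ_subset_iff, coe_eq_univ]

lemma mul_mem_colon_of_smul_mem {P : Submodule R M} {a c : R} {m : M} (ham : a • m ∈ P)
    (hc : c ∈ (span R {m}).colon ⊤) : a * c ∈ P.colon ⊤ := by
  refine mem_colon.mpr fun x _ => ?_
  obtain ⟨r, hr⟩ := mem_span_singleton.mp (mem_colon.mp hc x trivial)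
  rw [mul_smul, ← hr, smul_comm]
  exact P.smul_mem r ham

lemma IsPrimeSubmodule.isPrime_colon {P : Submodule R M} (hP : IsPrimeSubmodule P) :
    (P.colon ⊤).IsPrime := by
  refine ⟨fun h => hP.1 (colon_top_eq_top_iff.mp h), fun {a b} hab => ?_⟩
  refine or_iff_not_imp_left.mpr fun ha => ?_
  obtain ⟨m, -, ham⟩ := not_forall₂.mp (mt mem_colon.mpr ha)
  rw [mul_comm] at hab
  exact (hP.2 b (a • m) (mul_smul b a m ▸ mem_colon.mp hab m trivial)).resolve_left ham

lemma mrad_le {N P : Submodule R M} (hP : IsPrimeSubmodule P) (hNP : N ≤ P) : Mrad N ≤ P :=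
  sInf_le ⟨hP, hNP⟩

lemma IsMultiplicationModule.mem_smul_top_of_colon_span_le (hmul : IsMultiplicationModule R M)
    {m : M} {I : Ideal R} (h : (span R {m}).colon ⊤ ≤ I) : m ∈ I • (⊤ : Submodule R M) :=
  smul_mono_left h (hmul (span R {m}) ▸ mem_span_singleton_self m)

section Finite

variable [Module.Finite R M]

lemma colon_smul_top_le_radical (hfaith : (⊥ : Submodule R M).colon ⊤ = ⊥) (I : Ideal R) :
    (I • ⊤ : Submodule R M).colon ⊤ ≤ I.radical := by
  have hann : Module.annihilator R M = ⊥ := by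
    rwa [bot_colon', Set.top_eq_univ, span_univ, annihilator_top] at hfaith
  rw [← zeroLocus_subset_zeroLocus_iff, Set.top_eq_univ, ← annihilator_quotient,
    ← Module.support_eq_zeroLocus, Module.support_quotient, Module.support_eq_zeroLocus, hann,
    zeroLocus_bot, Set.univ_inter]

lemma colon_smul_top_le_of_isPrime (hfaith : (⊥ : Submodule R M).colon ⊤ = ⊥) {p : Ideal R}
    (hp : p.IsPrime) :
    (p • ⊤ : Submodule R M).colon ⊤ ≤ p :=
  (colon_smul_top_le_radical hfaith p).trans hp.radical.le

lemma isPrimeSubmodule_smul_top (hfaith : (⊥ : Submodule R M).colon ⊤ = ⊥)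
    (hmul : IsMultiplicationModule R M) {p : Ideal R} (hp : p.IsPrime) :
    IsPrimeSubmodule (p • ⊤ : Submodule R M) := by
  have hcolon := colon_smul_top_le_of_isPrime hfaith hp
  refine ⟨fun htop => hp.ne_top (top_le_iff.mp ?_), fun a m ham => ?_⟩
  · rwa [htop, top_colon] at hcolon
  refine or_iff_not_imp_right.mpr fun ha => hmul.mem_smul_top_of_colon_span_le fun c hc => ?_
  have hap : a ∉ p := fun hap => ha (mem_colon.mpr fun x _ => smul_mem_smul hap trivial)
  exact (hp.mem_or_mem (hcolon (mul_mem_colon_of_smul_mem ham hc))).resolve_left hap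

lemma mrad_eq_radical_colon_smul_top (hfaith : (⊥ : Submodule R M).colon ⊤ = ⊥)
    (hmul : IsMultiplicationModule R M) (N : Submodule R M) :
    Mrad N = (N.colon ⊤).radical • (⊤ : Submodule R M) := by
  refine le_antisymm (fun m hm => hmul.mem_smul_top_of_colon_span_le ?_) ?_
  · rw [Ideal.radical_eq_sInf]
    refine le_sInf fun p ⟨hNp, hp⟩ => ?_
    have hNpM : N ≤ p • ⊤ := (hmul N).le.trans (smul_mono_left hNp)
    have hmp : m ∈ p • (⊤ : Submodule R M) :=
      mrad_le (isPrimeSubmodule_smul_top hfaith hmul hp) hNpM hm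
    exact (colon_mono ((span_singleton_le_iff_mem _ _).mpr hmp) le_rfl).trans
      (colon_smul_top_le_of_isPrime hfaith hp)
  · refine le_sInf ?_
    rintro P ⟨hP, hNP⟩
    calc (N.colon ⊤).radical • ⊤ ≤ P.colon ⊤ • (⊤ : Submodule R M) :=
          smul_mono_left (hP.isPrime_colon.radical_le_iff.mpr (colon_mono hNP le_rfl))
      _ = P := (hmul P).symm

lemma colon_mrad_le_radical_colon (hfaith : (⊥ : Submodule R M).colon ⊤ = ⊥)
    (hmul : IsMultiplicationModule R M) (N : Submodule R M) :
    (Mrad N).colon ⊤ ≤ (N.colon ⊤).radical := by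
  simpa only [mrad_eq_radical_colon_smul_top hfaith hmul, Ideal.radical_idem] using
    colon_smul_top_le_radical hfaith (N.colon ⊤).radical

end Finite

end

theorem one_abs_primary_iff_colon_one_abs_primary {R M : Type*} [CommRing R] [AddCommGroup M]
    [Module R M] [Module.Finite R M] (hfaith : (⊥ : Submodule R M).colon ⊤ = ⊥)
    (hmul : IsMultiplicationModule R M) (N : Submodule R M) :
    Is1AbsPrimary N ↔ Is1AbsPrimaryIdeal (N.colon ⊤) := by
  rw [Is1AbsPrimary, Is1AbsPrimaryIdeal, ne_eq, ne_eq, colon_top_eq_top_iff]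
  refine and_congr_right fun _ =>
    ⟨fun h a b c ha hb _ habc => ?_, fun h a b ha hb m habm => ?_⟩
  · refine or_iff_not_imp_left.mpr fun hab => colon_mrad_le_radical_colon hfaith hmul N ?_
    refine mem_colon.mpr fun m _ => (h a b ha hb (c • m) ?_).resolve_left hab
    rw [smul_smul]
    exact mem_colon.mp habc m trivial
  · refine or_iff_not_imp_left.mpr fun hab => ?_
    rw [mrad_eq_radical_colon_smul_top hfaith hmul]
    refine hmul.mem_smul_top_of_colon_span_le fun d hd => ?_
    have habd := mul_mem_colon_of_smul_mem habm hd
    refine (h a b d ha hb (fun hdu => hab ?_) habd).resolve_left hab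
    exact (Ideal.mul_unit_mem_iff_mem _ hdu).mp habd
end

section
/- If N is a 1-absorbing primary submodule of a finitely generated multiplication R-module M, then for every m ∈ M with m ∉ M-rad(N), the radical √(N :_R m) is a prime ideal of R containing √(N :_R M). -/
open Submodule

/-!
A proper ideal whose radical contains one of `a`, `b` whenever `a * b` lies in it with `a`, `b`
non-units has a prime radical, so only non-units need testing. In a finitely generated
multiplication module each prime `q ⊇ (N :_R M)` gives a prime submodule `q M ⊇ N`, whence
`(M-rad N :_R M) ⊆ √(N :_R M)`; the 1-absorbing property applied to
`(b * b) • (a * a) • x = (a * b) ^ 2 • x` then makes `√(N :_R M)` prime. For `m ∉ M-rad N`, the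
same property puts `a * b` in `(N :_R M)` as soon as `(a * b) • m ∈ N`, and primality of
`√(N :_R M) ⊆ √(N :_R m)` finishes.
-/

namespace Ideal

variable {R : Type*} [CommRing R]

theorem isPrime_radical_of_forall_not_isUnit {I : Ideal R} (hI : I ≠ ⊤)
    (h : ∀ a b : R, ¬IsUnit a → ¬IsUnit b → a * b ∈ I → a ∈ I.radical ∨ b ∈ I.radical) :
    I.radical.IsPrime := by
  refine ⟨fun htop => hI (radical_eq_top.mp htop), fun {a b} hab => ?_⟩
  by_cases ha : IsUnit a
  · exact Or.inr ((unit_mul_mem_iff_mem _ ha).mp hab)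
  by_cases hb : IsUnit b
  · exact Or.inl ((mul_unit_mem_iff_mem _ hb).mp hab)
  obtain ⟨n, hn⟩ := mem_radical_iff.mp hab
  have hn' : a ^ (n + 1) * b ^ (n + 1) ∈ I := by
    rw [← mul_pow, pow_succ]
    exact I.mul_mem_right _ hn
  have hpow : n + 1 ≠ 0 := n.succ_ne_zero
  exact (h _ _ (mt (isUnit_pow_iff hpow).mp ha) (mt (isUnit_pow_iff hpow).mp hb) hn').imp
    mem_radical_of_pow_mem mem_radical_of_pow_mem

end Ideal

section

variable {R M : Type*} [CommRing R] [AddCommGroup M] [Module R M]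

theorem annihilator_le_colon_univ (N : Submodule R M) :
    Module.annihilator R M ≤ N.colon Set.univ := fun r hr =>
  mem_colon.mpr fun y _ => by rw [Module.mem_annihilator.mp hr y]; exact N.zero_mem

/-- A substitute for the determinant trick: `q ∈ Supp (M ⧸ q M) = Supp M ∩ V(q)`, so
`(q M :_R M) = Ann (M ⧸ q M) ⊆ q`. -/
theorem colon_univ_smul_top_eq [Module.Finite R M] {q : Ideal R} [q.IsPrime]
    (hq : Module.annihilator R M ≤ q) : (q • ⊤ : Submodule R M).colon Set.univ = q := by
  refine le_antisymm ?_ fun s hs => mem_colon.mpr fun y _ => smul_mem_smul hs mem_top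
  have hsupp : (⟨q, ‹_›⟩ : PrimeSpectrum R) ∈ Module.support R (M ⧸ (q • ⊤ : Submodule R M)) := by
    rw [Module.support_quotient]
    exact ⟨Module.mem_support_iff_of_finite.mpr hq, by simp⟩
  rw [← annihilator_quotient]
  exact Module.annihilator_le_of_mem_support hsupp

theorem le_mrad (N : Submodule R M) : N ≤ Mrad N := le_sInf fun _ hP => hP.2

theorem isPrimeSubmodule_of_isPrime_colon_univ (hmul : IsMultiplicationModule R M)
    {P : Submodule R M} (hP : (P.colon Set.univ).IsPrime) : IsPrimeSubmodule P := by
  refine ⟨fun htop => hP.ne_top (by simp [htop]), fun s x hsx => or_iff_not_imp_left.mpr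
    fun hx => ?_⟩
  set Ix := (span R {x}).colon (Set.univ : Set M)
  have hsIx : ∀ c ∈ Ix, s * c ∈ P.colon Set.univ := fun c hc => mem_colon.mpr fun y _ => by
    obtain ⟨r, hr⟩ := mem_span_singleton.mp (mem_colon.mp hc y trivial)
    rw [mul_smul, ← hr, smul_comm]
    exact P.smul_mem r hsx
  by_contra hs
  have hIx : Ix ≤ P.colon Set.univ := fun c hc => (hP.mem_or_mem (hsIx c hc)).resolve_left hs
  have hspan : span R {x} ≤ P := by
    rw [hmul (span R {x}), hmul P]
    exact smul_mono_left hIx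
  exact hx (hspan (mem_span_singleton_self x))

theorem colon_univ_mrad_le_radical [Module.Finite R M] (hmul : IsMultiplicationModule R M)
    (N : Submodule R M) : (Mrad N).colon Set.univ ≤ (N.colon Set.univ).radical := by
  rw [Ideal.radical_eq_sInf]
  refine le_sInf fun q ⟨hNq, hq⟩ => ?_
  have hann : Module.annihilator R M ≤ q := (annihilator_le_colon_univ N).trans hNq
  have hqM : IsPrimeSubmodule (q • ⊤ : Submodule R M) :=
    isPrimeSubmodule_of_isPrime_colon_univ hmul (by rwa [colon_univ_smul_top_eq hann])
  have hNle : N ≤ q • ⊤ := (hmul N).trans_le (smul_mono_left hNq)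
  calc (Mrad N).colon Set.univ ≤ (q • ⊤ : Submodule R M).colon Set.univ :=
        colon_mono (sInf_le ⟨hqM, hNle⟩) subset_rfl
    _ = q := colon_univ_smul_top_eq hann

theorem Is1AbsPrimary.isPrime_radical_colon_univ [Module.Finite R M]
    (hmul : IsMultiplicationModule R M) {N : Submodule R M} (hN : Is1AbsPrimary N) :
    (N.colon Set.univ).radical.IsPrime := by
  refine Ideal.isPrime_radical_of_forall_not_isUnit (by simpa using hN.1)
    fun a b ha hb hab => ?_
  by_cases hbb : b * b ∈ N.colon Set.univ
  · exact Or.inr (Ideal.mem_radical_iff.mpr ⟨2, by rwa [sq]⟩)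
  have haa : a * a ∈ (Mrad N).colon Set.univ := mem_colon.mpr fun z _ => by
    refine (hN.2 b b hb hb _ ?_).resolve_left hbb
    rw [smul_smul, show b * b * (a * a) = (a * b) * (a * b) by ring]
    exact mem_colon.mp ((N.colon Set.univ).mul_mem_left _ hab) z trivial
  exact Or.inl (Ideal.mem_radical_of_pow_mem (m := 2) (sq a ▸ colon_univ_mrad_le_radical hmul N haa))

end

theorem radical_colon_elem_isPrime {R M : Type*} [CommRing R] [AddCommGroup M]
    [Module R M] [Module.Finite R M] (hmul : IsMultiplicationModule R M)
    (N : Submodule R M) (hN : Is1AbsPrimary N) (m : M) (hm : m ∉ Mrad N) :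
    ((N.colon (Submodule.span R {m})).radical).IsPrime ∧
      (N.colon ⊤).radical ≤ (N.colon (Submodule.span R {m})).radical := by
  have hle : (N.colon ⊤).radical ≤ (N.colon (span R {m})).radical :=
    Ideal.radical_mono (colon_mono le_rfl (Set.subset_univ _))
  refine ⟨Ideal.isPrime_radical_of_forall_not_isUnit ?_ fun a b ha hb hab => ?_, hle⟩
  · rw [Ne, colon_eq_top_iff_subset, SetLike.coe_subset_coe, span_singleton_le_iff_mem]
    exact fun hmN => hm (le_mrad N hmN)
  have habJ : a * b ∈ N.colon ⊤ :=
    (hN.2 a b ha hb m (mem_colon_span_singleton.mp hab)).resolve_right hm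
  exact ((hN.isPrime_radical_colon_univ hmul).mem_or_mem (Ideal.le_radical habJ)).imp
    (@hle a) (@hle b)
end

section
/- Let M be a multiplication R-module and P a prime ideal of R. If N₁, ..., N_k are submodules of M each of which is 1-absorbing primary with √(N_i :_R M) = P, then their intersection ⋂ N_i is a 1-absorbing primary submodule with √((⋂N_i) :_R M) = P. -/
open Submodule

/-!
Every prime submodule `Q` has a prime colon ideal `(Q :_R M)`, and in a multiplication module
`(N :_R M) ≤ (Q :_R M)` forces `N ≤ Q`. Hence the `M`-radical of `N` depends only on
`√(N :_R M)`. Since the radical of a finite intersection of ideals is the intersection of the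
radicals, the `N i` and `⨅ i, N i` all have radical `P`, hence the same `M`-radical. If
`(a * b) • m ∈ ⨅ i, N i` but `a * b ∉ (N i :_R M)` for some `i`, the 1-absorbing property of
`N i` puts `m` in `M-rad (N i) = M-rad (⨅ i, N i)`.
-/

section

variable {R M : Type*} [CommRing R] [AddCommGroup M] [Module R M]

theorem Submodule.mem_colon_top {N : Submodule R M} {a : R} :
    a ∈ N.colon ⊤ ↔ ∀ m, a • m ∈ N := by
  simp [mem_colon]

theorem IsPrimeSubmodule.isPrime_colon_s13 {Q : Submodule R M} (hQ : IsPrimeSubmodule Q) :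
    (Q.colon ⊤).IsPrime where
  ne_top' h := hQ.1 (eq_top_iff'.2 fun m => (colon_eq_top_iff_subset _).1 h trivial)
  mem_or_mem' {x y} hxy := by
    refine or_iff_not_imp_right.2 fun hy => mem_colon_top.2 fun m => ?_
    refine (hQ.2 y (x • m) ?_).resolve_right hy
    rw [smul_smul, mul_comm]
    exact mem_colon_top.1 hxy m

theorem IsMultiplicationModule.le_of_colon_le (hmul : IsMultiplicationModule R M)
    {N Q : Submodule R M} (h : N.colon ⊤ ≤ Q.colon ⊤) : N ≤ Q :=
  calc N = N.colon ⊤ • ⊤ := hmul N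
    _ ≤ Q.colon ⊤ • ⊤ := smul_mono_left h
    _ ≤ Q := smul_le.2 fun _ hr m _ => mem_colon_top.1 hr m

theorem IsMultiplicationModule.Mrad_mono_of_radical_colon_le (hmul : IsMultiplicationModule R M)
    {N N' : Submodule R M} (h : (N.colon ⊤).radical ≤ (N'.colon ⊤).radical) :
    Mrad N ≤ Mrad N' :=
  sInf_le_sInf fun _ ⟨hQ, hN'Q⟩ => ⟨hQ, hmul.le_of_colon_le <| Ideal.le_radical.trans <|
    h.trans <| hQ.isPrime_colon_s13.radical_le_iff.2 (colon_mono hN'Q le_rfl)⟩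

theorem radical_colon_iInf_eq {ι : Type*} [Finite ι] (N : ι → Submodule R M) (i : ι)
    (h : ∀ j, ((N j).colon ⊤).radical = ((N i).colon ⊤).radical) :
    ((⨅ j, N j).colon ⊤).radical = ((N i).colon ⊤).radical := by
  have := Fintype.ofFinite ι
  rw [iInf_colon, ← Finset.inf_univ_eq_iInf]
  exact Ideal.radical_finset_inf (Finset.mem_univ i) fun j _ => h j

theorem Is1AbsPrimary.iInf {ι : Type*} [Nonempty ι] (hmul : IsMultiplicationModule R M)
    {N : ι → Submodule R M} (hN : ∀ i, Is1AbsPrimary (N i))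
    (hrad : ∀ i, ((N i).colon ⊤).radical ≤ ((⨅ i, N i).colon ⊤).radical) :
    Is1AbsPrimary (⨅ i, N i) := by
  obtain ⟨i₀⟩ := ‹Nonempty ι›
  refine ⟨fun htop => (hN i₀).1 (top_le_iff.1 (htop ▸ iInf_le N i₀)), fun a b ha hb m hm => ?_⟩
  rw [iInf_colon, Ideal.mem_iInf]
  refine or_iff_not_imp_left.2 fun hab => ?_
  obtain ⟨i, hi⟩ := not_forall.1 hab
  exact hmul.Mrad_mono_of_radical_colon_le (hrad i)
    (((hN i).2 a b ha hb m ((mem_iInf N).1 hm i)).resolve_left hi)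

end

theorem inf_P_one_abs_primary_general {R M : Type*} [CommRing R] [AddCommGroup M] [Module R M]
    (hmul : IsMultiplicationModule R M) (P : Ideal R)
    (k : ℕ) (hk : 0 < k) (N : Fin k → Submodule R M)
    (h : ∀ i, Is1AbsPrimary (N i) ∧ ((N i).colon ⊤).radical = P) :
    Is1AbsPrimary (⨅ i, N i) ∧ (((⨅ i, N i).colon ⊤)).radical = P := by
  have hrad : ((⨅ i, N i).colon ⊤).radical = P := by
    rw [radical_colon_iInf_eq N ⟨0, hk⟩ fun i => (h i).2.trans (h _).2.symm, (h _).2]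
  have : Nonempty (Fin k) := ⟨⟨0, hk⟩⟩
  exact ⟨Is1AbsPrimary.iInf hmul (fun i => (h i).1) fun i => ((h i).2.trans hrad.symm).le, hrad⟩

theorem inf_P_one_abs_primary {R M : Type*} [CommRing R] [AddCommGroup M] [Module R M]
    (hmul : IsMultiplicationModule R M) (P : Ideal R) (hP : P.IsPrime)
    (k : ℕ) (hk : 0 < k) (N : Fin k → Submodule R M)
    (h : ∀ i, Is1AbsPrimary (N i) ∧ ((N i).colon ⊤).radical = P) :
    Is1AbsPrimary (⨅ i, N i) ∧ (((⨅ i, N i).colon ⊤)).radical = P :=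
  inf_P_one_abs_primary_general hmul P k hk N h
end
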